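/- A Banach space X is mluacs if and only if for all x**, y** ∈ S_{X**} with x** + y** ∈ 2·S_X (viewing X canonically inside X**) and every x* ∈ S_{X*} with x**(x*) = 1, one also has y**(x*) = 1. -/

import Mathlib

open Filter Topology

/-- A real Banach space is mluacs (midpoint locally uniformly alternatively convex or smooth)
if for any sequences (xₙ), (yₙ) in the unit sphere, every unit vector x and every norm-one
functional x*, the conditions ‖x − (xₙ+yₙ)/2‖ → 0 and x*(xₙ) → 1 imply x*(yₙ) → 1. -/
def IsMluacs (X : Type*) [NormedAddCommGroup X] [NormedSpace ℝ X] : Prop :=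
  ∀ (xn yn : ℕ → X) (x : X) (f : StrongDual ℝ X),
    (∀ n, ‖xn n‖ = 1) → (∀ n, ‖yn n‖ = 1) → ‖x‖ = 1 → ‖f‖ = 1 →
    Tendsto (fun n => ‖x - (2 : ℝ)⁻¹ • (xn n + yn n)‖) atTop (𝓝 0) →
    Tendsto (fun n => f (xn n)) atTop (𝓝 1) →
    Tendsto (fun n => f (yn n)) atTop (𝓝 1)

section Aux

variable {X : Type*} [NormedAddCommGroup X] [NormedSpace ℝ X]

/-- Ultrafilter limits of bounded real sequences exist. -/
lemma exists_ulim (U : Ultrafilter ℕ) (s : ℕ → ℝ) (M : ℝ) (h : ∀ n, |s n| ≤ M) :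
    ∃ a : ℝ, |a| ≤ M ∧ Tendsto s (U : Filter ℕ) (𝓝 a) := by
  have hle : (U.map s : Filter ℝ) ≤ Filter.principal (Set.Icc (-M) M) := by
    rw [Filter.le_principal_iff]
    have : ∀ n, s n ∈ Set.Icc (-M) M := fun n => abs_le.1 (h n)
    exact Ultrafilter.mem_map.2 (U.sets_of_superset Filter.univ_mem (fun n _ => this n))
  obtain ⟨a, ha, hU⟩ := isCompact_Icc.ultrafilter_le_nhds (U.map s) hle
  exact ⟨a, abs_le.2 ⟨ha.1, ha.2⟩, hU⟩

/-- Weak-star cluster functional along an ultrafilter, for a sequence in the unit ball. -/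
lemma exists_ultrafilter_functional (U : Ultrafilter ℕ) (z : ℕ → X) (hz : ∀ n, ‖z n‖ ≤ 1) :
    ∃ F : StrongDual ℝ (StrongDual ℝ X), ‖F‖ ≤ 1 ∧
      ∀ g : StrongDual ℝ X, Tendsto (fun n => g (z n)) (U : Filter ℕ) (𝓝 (F g)) := by
  have key : ∀ g : StrongDual ℝ X, ∃ a : ℝ, |a| ≤ ‖g‖ ∧
      Tendsto (fun n => g (z n)) (U : Filter ℕ) (𝓝 a) := by
    intro g
    refine exists_ulim U _ ‖g‖ fun n => ?_
    calc |g (z n)| = ‖g (z n)‖ := rfl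
      _ ≤ ‖g‖ * ‖z n‖ := g.le_opNorm _
      _ ≤ ‖g‖ * 1 := by
          exact mul_le_mul_of_nonneg_left (hz n) (norm_nonneg g)
      _ = ‖g‖ := mul_one _
  choose L hL hLt using key
  have hadd : ∀ g h : StrongDual ℝ X, L (g + h) = L g + L h := by
    intro g h
    refine tendsto_nhds_unique (hLt (g + h)) ?_
    have := (hLt g).add (hLt h)
    simpa using this
  have hsmul : ∀ (c : ℝ) (g : StrongDual ℝ X), L (c • g) = c * L g := by
    intro c g
    refine tendsto_nhds_unique (hLt (c • g)) ?_
    have := (hLt g).const_mul c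
    simpa using this
  let F₀ : StrongDual ℝ X →ₗ[ℝ] ℝ :=
    { toFun := L
      map_add' := hadd
      map_smul' := hsmul }
  let F : StrongDual ℝ (StrongDual ℝ X) :=
    LinearMap.mkContinuous F₀ 1 (fun g => by
      simpa [F₀] using (hL g))
  refine ⟨F, ?_, fun g => hLt g⟩
  exact LinearMap.mkContinuous_norm_le F₀ zero_le_one _

/-- If a functional is bounded by `K` on the open ball of radius `r`, then `r * ‖g‖ ≤ K`. -/
lemma ball_norm_bound (g : StrongDual ℝ X) {r K : ℝ} (hr : 0 < r)
    (h : ∀ u : X, ‖u‖ < r → g u ≤ K) : r * ‖g‖ ≤ K := by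
  have hK : 0 ≤ K := by simpa using h 0 (by simpa using hr)
  have habs : ∀ u : X, ‖u‖ < r → |g u| ≤ K := by
    intro u hu
    rcases abs_cases (g u) with ⟨he, _⟩ | ⟨he, _⟩
    · rw [he]; exact h u hu
    · rw [he]
      have := h (-u) (by simpa using hu)
      simpa using this
  have hle : ‖g‖ ≤ K / r := by
    refine g.opNorm_le_bound (div_nonneg hK hr.le) ?_
    intro u
    rcases eq_or_ne u 0 with rfl | hu
    · simp
    rcases eq_or_ne (g u) 0 with hgu | hgu
    · rw [show ‖g u‖ = 0 by simp [hgu]]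
      positivity
    by_contra hlt
    push_neg at hlt
    have hu0 : 0 < ‖u‖ := norm_pos_iff.2 hu
    have hgu0 : 0 < |g u| := abs_pos.2 hgu
    have h1 : K * ‖u‖ / |g u| < r := by
      rw [div_lt_iff₀ hgu0]
      have : K / r * ‖u‖ < |g u| := hlt
      rw [div_mul_eq_mul_div, div_lt_iff₀ hr] at this
      linarith
    set r' : ℝ := (K * ‖u‖ / |g u| + r) / 2 with hr'
    have hr'pos : 0 < r' := by positivity
    have hr'lt : r' < r := by
      rw [hr']; linarith
    have hr'gt : K * ‖u‖ / |g u| < r' := by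
      rw [hr']; linarith
    have hvnorm : ‖(r' / ‖u‖) • u‖ = r' := by
      rw [norm_smul, Real.norm_eq_abs, abs_of_pos (by positivity), div_mul_cancel₀]
      exact hu0.ne'
    have hgv : |g ((r' / ‖u‖) • u)| = r' / ‖u‖ * |g u| := by
      rw [map_smul, smul_eq_mul, abs_mul, abs_of_pos (by positivity)]
    have hKlt : K < |g ((r' / ‖u‖) • u)| := by
      rw [hgv]
      rw [div_lt_iff₀ hgu0] at hr'gt
      rw [div_mul_eq_mul_div, lt_div_iff₀ hu0]
      linarith
    have := habs _ (by rw [hvnorm]; exact hr'lt)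
    linarith
  calc r * ‖g‖ ≤ r * (K / r) := mul_le_mul_of_nonneg_left hle hr.le
    _ = K := by field_simp

set_option maxHeartbeats 1000000 in
/-- Key separation lemma: if `F, G` lie in the bidual unit ball with `F + G = 2 J x` and
`F f = 1`, then near-midpoint elements with large `f`-value exist in `X` itself. -/
lemma key_approx (F G : StrongDual ℝ (StrongDual ℝ X)) (x : X)
    (f : StrongDual ℝ X) (hF : ‖F‖ ≤ 1) (hG : ‖G‖ ≤ 1)
    (hFG : F + G = (2 : ℝ) • NormedSpace.inclusionInDoubleDual ℝ X x)
    (hx : ‖x‖ = 1) (hf : ‖f‖ = 1) (hFf : F f = 1)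
    {ε : ℝ} (hε : 0 < ε) {s : ℝ} (hs : s < 1) :
    ∃ u : X, ‖u‖ < 1 + ε ∧ ‖u - (2 : ℝ) • x‖ < 1 + ε ∧ s < f u := by
  by_contra hcon
  push_neg at hcon
  set r : ℝ := 1 + ε with hr
  have hr1 : (1 : ℝ) ≤ r := by rw [hr]; linarith
  have hr0 : (0 : ℝ) < r := by linarith
  set S : Set (X × X) := Metric.ball 0 r ×ˢ Metric.ball ((2 : ℝ) • x) r with hS
  set T : Set (X × X) := {p : X × X | p.1 = p.2 ∧ s < f p.1} with hT
  have hSconv : Convex ℝ S := (convex_ball _ _).prod (convex_ball _ _)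
  have hSopen : IsOpen S := Metric.isOpen_ball.prod Metric.isOpen_ball
  have hTconv : Convex ℝ T := by
    intro p hp q hq a b ha hb hab
    obtain ⟨hp1, hp2⟩ := hp
    obtain ⟨hq1, hq2⟩ := hq
    constructor
    · show a • p.1 + b • q.1 = a • p.2 + b • q.2
      rw [hp1, hq1]
    · show s < f (a • p.1 + b • q.1)
      have : f (a • p.1 + b • q.1) = a * f p.1 + b * f q.1 := by
        simp [map_add, map_smul]
      rw [this]
      rcases eq_or_lt_of_le ha with heq | hapos
      · have hb1 : b = 1 := by linarith
        rw [← heq, hb1]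
        simpa using hq2
      · have h1 : a * s < a * f p.1 := mul_lt_mul_of_pos_left hp2 hapos
        have h2 : b * s ≤ b * f q.1 := mul_le_mul_of_nonneg_left hq2.le hb
        have hs' : a * s + b * s = s := by rw [← add_mul, hab, one_mul]
        linarith
  have hdisj : Disjoint S T := by
    rw [Set.disjoint_left]
    rintro ⟨u, v⟩ huv ⟨heq, hfv⟩
    simp only [hS, Set.mem_prod, Metric.mem_ball, dist_eq_norm] at huv
    obtain ⟨h1, h2⟩ := huv
    simp only at heq
    subst heq
    have := hcon u (by simpa using h1) (by simpa using h2)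
    exact absurd hfv (not_lt.2 this)
  obtain ⟨φ, c, hφS, hφT⟩ := geometric_hahn_banach_open hSconv hSopen hTconv hdisj
  obtain ⟨g1, g2, hφsplit⟩ : ∃ g1 g2 : StrongDual ℝ X,
      ∀ a b : X, φ (a, b) = g1 a + g2 b := by
    refine ⟨φ.comp (ContinuousLinearMap.inl ℝ X X), φ.comp (ContinuousLinearMap.inr ℝ X X),
      fun a b => ?_⟩
    have : ((a, b) : X × X) = (a, 0) + (0, b) := by simp
    rw [this, map_add]
    rfl
  -- h₀ := g1 + g2 satisfies h₀ u ≥ c whenever f u > s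
  have hb : ∀ u : X, s < f u → c ≤ g1 u + g2 u := by
    intro u hu
    have : ((u, u) : X × X) ∈ T := ⟨rfl, hu⟩
    have := hφT _ this
    rwa [hφsplit] at this
  -- find u0 with f u0 = 1
  have hfne : ∃ u : X, f u ≠ 0 := by
    by_contra hc
    push_neg at hc
    have : f = 0 := by ext u; exact hc u
    rw [this] at hf
    simp at hf
  obtain ⟨w, hw⟩ := hfne
  obtain ⟨u0, hfu0⟩ : ∃ u0 : X, f u0 = 1 :=
    ⟨(f w)⁻¹ • w, by rw [map_smul, smul_eq_mul, inv_mul_cancel₀ hw]⟩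
  -- kernel step
  have hker : ∀ v : X, f v = 0 → g1 v + g2 v = 0 := by
    intro v hv
    by_contra hne
    have hall : ∀ t : ℝ, c ≤ (s + 1) * (g1 u0 + g2 u0) + t * (g1 v + g2 v) := by
      intro t
      have hfval : s < f ((s + 1) • u0 + t • v) := by
        rw [map_add, map_smul, map_smul, hfu0, hv, smul_eq_mul, mul_one, smul_zero, add_zero]
        linarith
      have := hb _ hfval
      simp only [map_add, map_smul, smul_eq_mul] at this
      linarith
    have := hall ((c - (s + 1) * (g1 u0 + g2 u0) - 1) / (g1 v + g2 v))
    rw [div_mul_cancel₀ _ hne] at this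
    linarith
  set lam : ℝ := g1 u0 + g2 u0 with hlam
  have hrep : ∀ u : X, g1 u + g2 u = lam * f u := by
    intro u
    have hker' := hker (u - f u • u0) (by rw [map_sub, map_smul, hfu0]; simp)
    rw [map_sub, map_sub, map_smul, map_smul, smul_eq_mul, smul_eq_mul] at hker'
    rw [hlam]; linarith
  have hlamt : ∀ t : ℝ, s < t → c ≤ lam * t := by
    intro t ht
    have := hb (t • u0) (by rw [map_smul, smul_eq_mul, hfu0]; simpa using ht)
    rw [hrep, map_smul, smul_eq_mul, hfu0, mul_one] at this
    exact this
  have hlam0 : 0 ≤ lam := by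
    by_contra hneg
    push_neg at hneg
    have h1 := hlamt (max (s + 1) ((c - 1) / lam)) (lt_max_of_lt_left (by linarith))
    have h2 : lam * max (s + 1) ((c - 1) / lam) ≤ c - 1 := by
      have : (c - 1) / lam ≤ max (s + 1) ((c - 1) / lam) := le_max_right _ _
      calc lam * max (s + 1) ((c - 1) / lam) ≤ lam * ((c - 1) / lam) :=
            mul_le_mul_of_nonpos_left this hneg.le
        _ = c - 1 := by rw [mul_comm, div_mul_cancel₀ _ hneg.ne]
    linarith
  have hcls : c ≤ lam * s := by
    by_contra hcgt
    push_neg at hcgt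
    rcases eq_or_lt_of_le hlam0 with heq | hpos
    · have := hlamt (s + 1) (by linarith)
      rw [← heq] at this hcgt
      simp at this hcgt
      linarith
    · have hδ : 0 < (c - lam * s) / (2 * lam) := div_pos (by linarith) (by linarith)
      have := hlamt (s + (c - lam * s) / (2 * lam)) (by linarith)
      have hexp : lam * (s + (c - lam * s) / (2 * lam)) = lam * s + (c - lam * s) / 2 := by
        field_simp [hpos.ne']
      rw [hexp] at this
      nlinarith [this, hcgt]
  have hlampos : 0 < lam := by
    rcases eq_or_lt_of_le hlam0 with heq | hpos
    · exfalso
      have hc0 : c ≤ 0 := by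
        have := hcls; rw [← heq] at this; simpa using this
      have hxS : ((x, x) : X × X) ∈ S := by
        constructor
        · simp [hx, hr0]; linarith
        · simp [Metric.mem_ball, dist_eq_norm]
          have : ‖x - (2 : ℝ) • x‖ = ‖x‖ := by
            have : x - (2 : ℝ) • x = -x := by
              rw [two_smul]; abel
            rw [this, norm_neg]
          rw [this, hx]; linarith
      have := hφS _ hxS
      rw [hφsplit, hrep, ← heq] at this
      simp at this
      linarith
    · exact hpos
  -- norm bounds from the S side
  have hSbound : ∀ u1 : X, ‖u1‖ < r → ∀ v : X, ‖v‖ < r →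
      g1 u1 + g2 ((2 : ℝ) • x) + g2 v < c := by
    intro u1 hu1 v hv
    have hmem : ((u1, (2 : ℝ) • x + v) : X × X) ∈ S := by
      constructor
      · simpa [dist_eq_norm] using hu1
      · simp [Metric.mem_ball, dist_eq_norm]
        simpa using hv
    have := hφS _ hmem
    rw [hφsplit, map_add] at this
    linarith
  have hb1 : ∀ v : X, ‖v‖ < r → r * ‖g1‖ ≤ c - g2 ((2 : ℝ) • x) - g2 v := by
    intro v hv
    refine ball_norm_bound g1 hr0 fun u1 hu1 => ?_
    have := hSbound u1 hu1 v hv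
    linarith
  have hb2 : r * ‖g2‖ ≤ c - g2 ((2 : ℝ) • x) - r * ‖g1‖ := by
    refine ball_norm_bound g2 hr0 fun v hv => ?_
    have := hb1 v hv
    linarith
  -- final contradiction
  have hFg1 : F g1 ≤ r * ‖g1‖ := by
    calc F g1 ≤ |F g1| := le_abs_self _
      _ ≤ ‖F‖ * ‖g1‖ := F.le_opNorm g1
      _ ≤ 1 * ‖g1‖ := mul_le_mul_of_nonneg_right hF (norm_nonneg _)
      _ ≤ r * ‖g1‖ := mul_le_mul_of_nonneg_right hr1 (norm_nonneg _)
  have hFg2 : F g2 ≤ g2 ((2 : ℝ) • x) + r * ‖g2‖ := by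
    have hsum : F g2 + G g2 = g2 ((2 : ℝ) • x) := by
      have h := congrArg (fun H => H g2) hFG
      simp only [ContinuousLinearMap.add_apply, ContinuousLinearMap.smul_apply,
        smul_eq_mul] at h
      rw [h, NormedSpace.dual_def, map_smul, smul_eq_mul]
    have habs : |G g2| ≤ ‖g2‖ := by
      calc |G g2| ≤ ‖G‖ * ‖g2‖ := G.le_opNorm g2
        _ ≤ 1 * ‖g2‖ := mul_le_mul_of_nonneg_right hG (norm_nonneg _)
        _ = ‖g2‖ := one_mul _
    have h1 : -‖g2‖ ≤ G g2 := neg_le_of_abs_le habs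
    have h2 : ‖g2‖ ≤ r * ‖g2‖ := by
      nlinarith [norm_nonneg g2]
    linarith
  have hFf' : F f ≤ s := by
    have hfeq : f = lam⁻¹ • (g1 + g2) := by
      ext u
      rw [ContinuousLinearMap.smul_apply, ContinuousLinearMap.add_apply, hrep, smul_eq_mul]
      field_simp
    rw [hfeq, map_smul, smul_eq_mul]
    have h1 : F (g1 + g2) ≤ lam * s := by
      rw [map_add]
      calc F g1 + F g2 ≤ r * ‖g1‖ + (g2 ((2 : ℝ) • x) + r * ‖g2‖) := add_le_add hFg1 hFg2
        _ ≤ c := by linarith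
        _ ≤ lam * s := hcls
    calc lam⁻¹ * F (g1 + g2) ≤ lam⁻¹ * (lam * s) := by
          exact mul_le_mul_of_nonneg_left h1 (by positivity)
      _ = s := by field_simp
  rw [hFf] at hFf'
  linarith

end Aux

set_option maxHeartbeats 1000000 in
theorem mluacs_iff_bidual (X : Type*) [NormedAddCommGroup X] [NormedSpace ℝ X]
    [CompleteSpace X] :
    IsMluacs X ↔
      ∀ F G : StrongDual ℝ (StrongDual ℝ X), ‖F‖ = 1 → ‖G‖ = 1 →
        (∃ x : X, ‖x‖ = 1 ∧ F + G = (2 : ℝ) • NormedSpace.inclusionInDoubleDual ℝ X x) →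
        ∀ f : StrongDual ℝ X, ‖f‖ = 1 → F f = 1 → G f = 1 := by
  constructor
  · -- necessity: mluacs ⇒ bidual property (via the separation lemma)
    intro hml F G hF hG hex f hf hFf
    obtain ⟨x, hx, hFG⟩ := hex
    -- Step 1: get approximating sequence
    have happ : ∀ n : ℕ, ∃ u : X, ‖u‖ < 1 + 1 / (n + 1) ∧
        ‖u - (2 : ℝ) • x‖ < 1 + 1 / (n + 1) ∧ 1 - 1 / (n + 1) < f u := by
      intro n
      have hpos : (0 : ℝ) < 1 / (n + 1) := by positivity
      exact key_approx F G x f hF.le hG.le hFG hx hf hFf hpos (by linarith)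
    choose u hu1 hu2 hu3 using happ
    set δ : ℕ → ℝ := fun n => 1 / (n + 1) with hδ
    have hδpos : ∀ n, 0 < δ n := fun n => by positivity
    have hδle1 : ∀ n, δ n ≤ 1 := by
      intro n
      rw [hδ]
      rw [div_le_one (by positivity)]
      simp
    have hδ0 : Tendsto δ atTop (𝓝 0) := tendsto_one_div_add_atTop_nhds_zero_nat
    set a : ℕ → ℝ := fun n => ‖u n‖ with ha
    set b : ℕ → ℝ := fun n => ‖(2 : ℝ) • x - u n‖ with hbdef
    have hfu_le : ∀ n, f (u n) ≤ a n := by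
      intro n
      calc f (u n) ≤ |f (u n)| := le_abs_self _
        _ ≤ ‖f‖ * ‖u n‖ := f.le_opNorm _
        _ = a n := by rw [hf, one_mul]
    have halow : ∀ n, 1 - δ n < a n := fun n => lt_of_lt_of_le (hu3 n) (hfu_le n)
    have hahigh : ∀ n, a n < 1 + δ n := hu1
    have hapos : ∀ n, 0 < a n := by
      intro n
      have := halow n
      have := hδle1 n
      linarith
    have hblow : ∀ n, 1 - δ n < b n := by
      intro n
      have h2x : ‖(2 : ℝ) • x‖ = 2 := by
        rw [norm_smul, hx]
        simp
      have : ‖(2 : ℝ) • x‖ - ‖u n‖ ≤ b n := by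
        rw [hbdef]
        exact norm_sub_norm_le _ _
      rw [h2x] at this
      have := hahigh n
      linarith
    have hbhigh : ∀ n, b n < 1 + δ n := by
      intro n
      rw [hbdef]
      simp only
      rw [norm_sub_rev]
      exact hu2 n
    have hbpos : ∀ n, 0 < b n := by
      intro n
      have := hblow n
      have := hδle1 n
      linarith
    have halim : Tendsto a atTop (𝓝 1) := by
      refine tendsto_of_tendsto_of_tendsto_of_le_of_le
        (g := fun n => 1 - δ n) (h := fun n => 1 + δ n) ?_ ?_
        (fun n => (halow n).le) (fun n => (hahigh n).le)
      · simpa using (tendsto_const_nhds (x := (1:ℝ))).sub hδ0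
      · simpa using (tendsto_const_nhds (x := (1:ℝ))).add hδ0
    have hblim : Tendsto b atTop (𝓝 1) := by
      refine tendsto_of_tendsto_of_tendsto_of_le_of_le
        (g := fun n => 1 - δ n) (h := fun n => 1 + δ n) ?_ ?_
        (fun n => (hblow n).le) (fun n => (hbhigh n).le)
      · simpa using (tendsto_const_nhds (x := (1:ℝ))).sub hδ0
      · simpa using (tendsto_const_nhds (x := (1:ℝ))).add hδ0
    have hfulim : Tendsto (fun n => f (u n)) atTop (𝓝 1) := by
      refine tendsto_of_tendsto_of_tendsto_of_le_of_le
        (g := fun n => 1 - δ n) (h := a) ?_ halim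
        (fun n => (hu3 n).le) hfu_le
      simpa using (tendsto_const_nhds (x := (1:ℝ))).sub hδ0
    set xn : ℕ → X := fun n => (a n)⁻¹ • u n with hxn
    set yn : ℕ → X := fun n => (b n)⁻¹ • ((2 : ℝ) • x - u n) with hyn
    have hxnorm : ∀ n, ‖xn n‖ = 1 := by
      intro n
      rw [hxn]
      simp only
      rw [norm_smul, Real.norm_eq_abs, abs_of_pos (inv_pos.2 (hapos n))]
      rw [inv_mul_cancel₀ (hapos n).ne']
    have hynorm : ∀ n, ‖yn n‖ = 1 := by
      intro n
      rw [hyn]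
      simp only
      rw [norm_smul, Real.norm_eq_abs, abs_of_pos (inv_pos.2 (hbpos n))]
      rw [inv_mul_cancel₀ (hbpos n).ne']
    -- midpoint condition
    have hmid : Tendsto (fun n => ‖x - (2 : ℝ)⁻¹ • (xn n + yn n)‖) atTop (𝓝 0) := by
      have hbound : ∀ n, ‖x - (2 : ℝ)⁻¹ • (xn n + yn n)‖ ≤
          (2 : ℝ)⁻¹ * (|1 - a n| + |1 - b n|) := by
        intro n
        have hid : x - (2 : ℝ)⁻¹ • (xn n + yn n) =
            (-(2 : ℝ)⁻¹) • (((a n)⁻¹ - 1) • u n + ((b n)⁻¹ - 1) • ((2 : ℝ) • x - u n)) := by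
          rw [hxn, hyn]
          simp only
          match_scalars <;> (field_simp; try ring)
        rw [hid, norm_smul, Real.norm_eq_abs]
        have habs2 : |(-(2 : ℝ)⁻¹)| = (2 : ℝ)⁻¹ := by norm_num
        rw [habs2]
        refine mul_le_mul_of_nonneg_left ?_ (by norm_num)
        calc ‖((a n)⁻¹ - 1) • u n + ((b n)⁻¹ - 1) • ((2 : ℝ) • x - u n)‖
            ≤ ‖((a n)⁻¹ - 1) • u n‖ + ‖((b n)⁻¹ - 1) • ((2 : ℝ) • x - u n)‖ := norm_add_le _ _
          _ = |(a n)⁻¹ - 1| * a n + |(b n)⁻¹ - 1| * b n := by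
              rw [norm_smul, norm_smul, Real.norm_eq_abs, Real.norm_eq_abs]
          _ = |1 - a n| + |1 - b n| := by
              have e1 : |(a n)⁻¹ - 1| * a n = |1 - a n| := by
                have h : ((a n)⁻¹ - 1) * a n = 1 - a n := by
                  field_simp [(hapos n).ne']
                calc |(a n)⁻¹ - 1| * a n = |(a n)⁻¹ - 1| * |a n| := by
                      rw [abs_of_pos (hapos n)]
                  _ = |((a n)⁻¹ - 1) * a n| := (abs_mul _ _).symm
                  _ = |1 - a n| := by rw [h]
              have e2 : |(b n)⁻¹ - 1| * b n = |1 - b n| := by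
                have h : ((b n)⁻¹ - 1) * b n = 1 - b n := by
                  field_simp [(hbpos n).ne']
                calc |(b n)⁻¹ - 1| * b n = |(b n)⁻¹ - 1| * |b n| := by
                      rw [abs_of_pos (hbpos n)]
                  _ = |((b n)⁻¹ - 1) * b n| := (abs_mul _ _).symm
                  _ = |1 - b n| := by rw [h]
              rw [e1, e2]
      have hclim : Tendsto (fun n => (2 : ℝ)⁻¹ * (|1 - a n| + |1 - b n|)) atTop (𝓝 0) := by
        have h1 : Tendsto (fun n => |1 - a n|) atTop (𝓝 0) := by
          have := ((tendsto_const_nhds (x := (1:ℝ))).sub halim).abs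
          simpa using this
        have h2 : Tendsto (fun n => |1 - b n|) atTop (𝓝 0) := by
          have := ((tendsto_const_nhds (x := (1:ℝ))).sub hblim).abs
          simpa using this
        have := (h1.add h2).const_mul (2 : ℝ)⁻¹
        simpa using this
      refine tendsto_of_tendsto_of_tendsto_of_le_of_le
        (g := fun _ => (0 : ℝ)) (h := fun n => (2 : ℝ)⁻¹ * (|1 - a n| + |1 - b n|))
        tendsto_const_nhds hclim (fun n => norm_nonneg _) hbound
    have hfxn : Tendsto (fun n => f (xn n)) atTop (𝓝 1) := by
      have : ∀ n, f (xn n) = (a n)⁻¹ * f (u n) := by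
        intro n
        rw [hxn]
        simp [map_smul]
      simp only [this]
      have := (halim.inv₀ one_ne_zero).mul hfulim
      simpa using this
    have hres := hml xn yn x f hxnorm hynorm hx hf hmid hfxn
    -- f(yn n) = (b n)⁻¹ * (2 f x - f (u n)) → 2 f x - 1
    have hfyn : Tendsto (fun n => f (yn n)) atTop (𝓝 (2 * f x - 1)) := by
      have heq : ∀ n, f (yn n) = (b n)⁻¹ * (2 * f x - f (u n)) := by
        intro n
        rw [hyn]
        simp [map_smul, map_sub]
        try ring
      simp only [heq]
      have h1 : Tendsto (fun n => 2 * f x - f (u n)) atTop (𝓝 (2 * f x - 1)) :=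
        (tendsto_const_nhds).sub hfulim
      have := (hblim.inv₀ one_ne_zero).mul h1
      simpa using this
    have hfx1 : 2 * f x - 1 = 1 := tendsto_nhds_unique hfyn hres
    -- conclude
    have hsum : F f + G f = 2 * f x := by
      have := congrArg (fun H => H f) hFG
      simp only [ContinuousLinearMap.add_apply, ContinuousLinearMap.smul_apply,
        smul_eq_mul] at this
      rw [this, NormedSpace.dual_def]
    rw [hFf] at hsum
    linarith
  · -- sufficiency: bidual property ⇒ mluacs (via ultrafilter limits)
    intro hRHS xn yn x f hxn hyn hx hf hmid hfx
    rw [tendsto_iff_ultrafilter]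
    intro U hU
    obtain ⟨F, hF, hFt⟩ := exists_ultrafilter_functional U xn (fun n => (hxn n).le)
    obtain ⟨G, hG, hGt⟩ := exists_ultrafilter_functional U yn (fun n => (hyn n).le)
    -- sum tends to 2x in norm
    have hsumnorm : Tendsto (fun n => xn n + yn n) atTop (𝓝 ((2 : ℝ) • x)) := by
      rw [tendsto_iff_norm_sub_tendsto_zero]
      have heq : ∀ n, ‖xn n + yn n - (2 : ℝ) • x‖ =
          2 * ‖x - (2 : ℝ)⁻¹ • (xn n + yn n)‖ := by
        intro n
        have : xn n + yn n - (2 : ℝ) • x =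
            (-2 : ℝ) • (x - (2 : ℝ)⁻¹ • (xn n + yn n)) := by
          match_scalars <;> norm_num
        rw [this, norm_smul]
        norm_num
      simp only [heq]
      have := hmid.const_mul (2 : ℝ)
      simpa using this
    have hsum : F + G = (2 : ℝ) • NormedSpace.inclusionInDoubleDual ℝ X x := by
      ext g
      have h1 : Tendsto (fun n => g (xn n) + g (yn n)) (U : Filter ℕ) (𝓝 (F g + G g)) :=
        (hFt g).add (hGt g)
      have h2 : Tendsto (fun n => g (xn n) + g (yn n)) (U : Filter ℕ) (𝓝 (g ((2 : ℝ) • x))) := by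
        have hcont : Tendsto (fun n => g (xn n + yn n)) atTop (𝓝 (g ((2 : ℝ) • x))) :=
          (g.continuous.tendsto _).comp hsumnorm
        have : Tendsto (fun n => g (xn n + yn n)) (U : Filter ℕ) (𝓝 (g ((2 : ℝ) • x))) :=
          hcont.mono_left hU
        simpa [map_add] using this
      have h3 : F g + G g = g ((2 : ℝ) • x) := tendsto_nhds_unique h1 h2
      simp only [ContinuousLinearMap.add_apply, ContinuousLinearMap.smul_apply, smul_eq_mul]
      rw [h3, NormedSpace.dual_def, map_smul, smul_eq_mul]
    have hFf : F f = 1 := tendsto_nhds_unique (hFt f) (hfx.mono_left hU)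
    have hFnorm : ‖F‖ = 1 := by
      refine le_antisymm hF ?_
      have : |F f| ≤ ‖F‖ * ‖f‖ := F.le_opNorm f
      rw [hFf, hf, mul_one] at this
      simpa using this
    have hGnorm : ‖G‖ = 1 := by
      refine le_antisymm hG ?_
      have hJx : ‖NormedSpace.inclusionInDoubleDual ℝ X x‖ = 1 := by
        have := (NormedSpace.inclusionInDoubleDualLi ℝ (E := X)).norm_map x
        rw [hx] at this
        exact this
      have h2 : ‖F + G‖ = 2 := by
        rw [hsum, (NormedSpace.toNormSMulClass (𝕜 := ℝ) (E := StrongDual ℝ X →L[ℝ] ℝ)).norm_smul, hJx]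
        norm_num
      have h3 : ‖F + G‖ ≤ ‖F‖ + ‖G‖ := ContinuousLinearMap.opNorm_add_le F G
      rw [h2, hFnorm] at h3
      linarith
    have hGf : G f = 1 := hRHS F G hFnorm hGnorm ⟨x, hx, hsum⟩ f hf hFf
    have := hGt f
    rwa [hGf] at this
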